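/- arXiv:1810.03546 — 2 statements merged into one kernel-verified Lean document; each statement's English description precedes it below -/
import Mathlib

section
/- Let G be a group equipped with a probability measure 𝔾 on a sigma-algebra of subsets of G such that 𝔾 is left-invariant: 𝔾(hA) = 𝔾(A) for all measurable A and all h ∈ G. Let ρ : G → Aut(V) be a representation of G by linear isometries of a Banach space V such that g ↦ ρ(g)v is measurable (Bochner-integrable) for each v ∈ V. If S is a non-empty G-invariant convex closed subset of V, then S contains a G-invariant element. -/
open MeasureTheory

/-- mutual-fund theorem: a nonempty closed convex subset of a Banach space,
invariant under a representation by linear isometries of a group carrying a left-invariant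
probability measure (with integrable orbit maps), contains a G-invariant element. -/
theorem invariant_element_of_convex_closed
    {G : Type*} [Group G] [MeasurableSpace G] [MeasurableMul G]
    (𝔾 : Measure G) [IsProbabilityMeasure 𝔾]
    (hleft : ∀ (h : G) (A : Set G), MeasurableSet A → 𝔾 ((fun g => h * g) ⁻¹' A) = 𝔾 A)
    {V : Type*} [NormedAddCommGroup V] [NormedSpace ℝ V] [CompleteSpace V]
    (ρ : G →* (V ≃ₗᵢ[ℝ] V))
    (hmeas : ∀ v : V, Integrable (fun g => ρ g v) 𝔾)
    (S : Set V) (hS : S.Nonempty) (hconv : Convex ℝ S) (hclosed : IsClosed S)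
    (hinvS : ∀ g : G, (ρ g) '' S = S) :
    ∃ s ∈ S, ∀ g : G, ρ g s = s := by
  obtain ⟨s', hs'⟩ := hS
  set s : V := ∫ g, ρ g s' ∂𝔾 with hs_def
  have hmem : s ∈ S := by
    apply hconv.integral_mem hclosed _ (hmeas s')
    filter_upwards with g
    rw [← hinvS g]
    exact Set.mem_image_of_mem _ hs'
  refine ⟨s, hmem, fun h => ?_⟩
  have hmp : MeasurePreserving (fun g => h * g) 𝔾 𝔾 := by
    refine ⟨measurable_const_mul h, ?_⟩
    ext A hA
    rw [Measure.map_apply (measurable_const_mul h) hA]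
    exact hleft h A hA
  have key : ∫ g, ρ (h * g) s' ∂𝔾 = ∫ g, ρ g s' ∂𝔾 := by
    have h1 : ∫ y, ρ y s' ∂(𝔾.map (fun g => h * g)) = ∫ g, ρ (h * g) s' ∂𝔾 :=
      integral_map (measurable_const_mul h).aemeasurable
        (by rw [hmp.map_eq]; exact (hmeas s').aestronglyMeasurable)
    rw [← h1, hmp.map_eq]
  calc ρ h s = ((ρ h).toContinuousLinearEquiv : V →L[ℝ] V) (∫ g, ρ g s' ∂𝔾) := rfl
    _ = ∫ g, ((ρ h).toContinuousLinearEquiv : V →L[ℝ] V) (ρ g s') ∂𝔾 :=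
        (ContinuousLinearMap.integral_comp_comm _ (hmeas s')).symm
    _ = ∫ g, ρ (h * g) s' ∂𝔾 := by
        simp only [map_mul]
        rfl
    _ = s := key
end

section
/- Let m be a probability measure on (0, ∞) with cumulative distribution function F_m. On the product space (0, ∞) × [0, 1) with product measure m × Lebesgue, define U_m(x, y) = (1 − y)·F_m(x⁻) + y·F_m(x⁺), where F_m(x⁻) and F_m(x⁺) denote the left and right limits of F_m at x. Then U_m is a uniformly distributed random variable on [0, 1]: P(U_m ≤ z) = z for all z ∈ (0, 1). -/
/-!
Let `x₀` be the point where `F` crosses the level `z`, so `F(x₀⁻) ≤ z ≤ F(x₀)`. For `x < x₀` the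
values `U(x, ·)`, which sweep the segment `[F(x⁻), F(x)]`, are all `≤ z`, and for `x > x₀` they are
all `> z`. Integrating the slices over `x` therefore gives
`m(-∞, x₀) + m{x₀} · λ{y : U(x₀, y) ≤ z}`. Since `U(x₀, ·)` is affine with slope
`m{x₀} = F(x₀) - F(x₀⁻)`, the second term is `z - F(x₀⁻)`, and the first is `F(x₀⁻)`.
-/

open MeasureTheory ProbabilityTheory Set Filter Function
open scoped Topology ENNReal

theorem StieltjesFunction.exists_leftLim_le_le_and_lt_leftLim (f : StieltjesFunction ℝ) {z : ℝ}
    (hlo : ∃ x, f x ≤ z) (hhi : ∃ x, z < f x) :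
    ∃ x₀, leftLim f x₀ ≤ z ∧ z ≤ f x₀ ∧ ∀ x, x₀ < x → z < leftLim f x := by
  set S := {x | f x ≤ z}
  obtain ⟨x₁, hx₁⟩ := hhi
  have hbdd : BddAbove S := ⟨x₁, fun x hx => le_of_lt <| f.mono.reflect_lt (hx.trans_lt hx₁)⟩
  have hgt : ∀ x, sSup S < x → z < f x := fun x hx =>
    lt_of_not_ge fun hxS => hx.not_ge (le_csSup hbdd hxS)
  refine ⟨sSup S, ?_, ?_, fun x hx => ?_⟩
  · refine le_of_tendsto (f.mono.tendsto_leftLim _) ?_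
    filter_upwards [self_mem_nhdsWithin] with x hx
    obtain ⟨x', hx'S, hxx'⟩ := exists_lt_of_lt_csSup hlo hx
    exact (f.mono hxx'.le).trans hx'S
  · refine ge_of_tendsto ((f.right_continuous _).mono Ioi_subset_Ici_self) ?_
    filter_upwards [self_mem_nhdsWithin] with x hx using (hgt x hx).le
  · obtain ⟨x', hx', hx'x⟩ := exists_between hx
    exact (hgt x' hx').trans_le (f.mono.le_leftLim hx'x)

section Segment

variable {a b z : ℝ}

theorem restrict_Ico_setOf_convexCombo_le_eq_one (ha : a ≤ z) (hb : b ≤ z) :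
    volume.restrict (Ico (0 : ℝ) 1) {y | (1 - y) * a + y * b ≤ z} = 1 := by
  refine (Measure.restrict_apply_superset fun y hy => ?_).trans (by simp)
  obtain ⟨hy0, hy1⟩ := hy
  have : (1 - y) * a ≤ (1 - y) * z := mul_le_mul_of_nonneg_left ha (by linarith)
  have : y * b ≤ y * z := mul_le_mul_of_nonneg_left hb hy0
  show (1 - y) * a + y * b ≤ z
  linarith

theorem restrict_Ico_setOf_convexCombo_le_eq_zero (ha : z < a) (hb : z < b) :
    volume.restrict (Ico (0 : ℝ) 1) {y | (1 - y) * a + y * b ≤ z} = 0 := by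
  suffices {y | (1 - y) * a + y * b ≤ z} ∩ Ico 0 1 = ∅ by
    rw [Measure.restrict_apply' measurableSet_Ico, this, measure_empty]
  refine eq_empty_of_forall_notMem fun y ⟨hy, hy0, hy1⟩ => ?_
  have : (1 - y) * z < (1 - y) * a := mul_lt_mul_of_pos_left ha (by linarith)
  have : y * z ≤ y * b := mul_le_mul_of_nonneg_left hb.le hy0
  have : (1 - y) * a + y * b ≤ z := hy
  linarith

theorem ofReal_sub_mul_restrict_Ico_setOf_convexCombo_le (ha : a ≤ z) (hb : z ≤ b) :
    ENNReal.ofReal (b - a) * volume.restrict (Ico (0 : ℝ) 1) {y | (1 - y) * a + y * b ≤ z} =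
      ENNReal.ofReal (z - a) := by
  rcases (ha.trans hb).eq_or_lt with rfl | hab
  · simp [le_antisymm hb ha]
  have hba : 0 < b - a := sub_pos.mpr hab
  have hset : {y | (1 - y) * a + y * b ≤ z} ∩ Icc 0 1 = Icc 0 ((z - a) / (b - a)) := by
    ext y
    simp only [mem_inter_iff, mem_ofPred_eq, mem_Icc, le_div_iff₀ hba]
    constructor
    · rintro ⟨hy, hy0, -⟩
      exact ⟨hy0, by linarith⟩
    · rintro ⟨hy0, hyc⟩
      have hy1 : y * (b - a) ≤ 1 * (b - a) := by linarith
      exact ⟨by linarith, hy0, le_of_mul_le_mul_right hy1 hba⟩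
  rw [Measure.restrict_congr_set Ico_ae_eq_Icc, Measure.restrict_apply' measurableSet_Icc, hset,
    Real.volume_Icc, sub_zero, ← ENNReal.ofReal_mul hba.le, mul_div_cancel₀ _ hba.ne']

end Segment

theorem lintegral_eq_measure_Iio_add_measure_singleton_mul {α : Type*} [LinearOrder α]
    [TopologicalSpace α] [OrderClosedTopology α] [MeasurableSpace α] [OpensMeasurableSpace α]
    (μ : Measure α) {g : α → ℝ≥0∞} {x₀ : α} (hlt : ∀ x < x₀, g x = 1)
    (hgt : ∀ x, x₀ < x → g x = 0) :
    ∫⁻ x, g x ∂μ = μ (Iio x₀) + μ {x₀} * g x₀ := by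
  calc ∫⁻ x, g x ∂μ
      = ∫⁻ x, (Iio x₀).indicator 1 x + ({x₀} : Set α).indicator (fun _ => g x₀) x ∂μ := by
        refine lintegral_congr fun x => ?_
        rcases lt_trichotomy x x₀ with h | rfl | h
        · simp [h, h.ne, hlt x h]
        · simp
        · simp [h.not_gt, h.ne', hgt x h]
    _ = μ (Iio x₀) + μ {x₀} * g x₀ := by
        rw [lintegral_add_left (measurable_one.indicator measurableSet_Iio),
          lintegral_indicator_one measurableSet_Iio,
          lintegral_indicator_const (measurableSet_singleton x₀), mul_comm]

theorem ProbabilityTheory.prod_restrict_Ico_setOf_convexCombo_cdf_le (μ : Measure ℝ)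
    [IsProbabilityMeasure μ] {z : ℝ} (hz : z ∈ Ioo 0 1) :
    μ.prod (volume.restrict (Ico (0 : ℝ) 1))
        {p : ℝ × ℝ | (1 - p.2) * leftLim (cdf μ) p.1 + p.2 * cdf μ p.1 ≤ z} =
      ENNReal.ofReal z := by
  set f := cdf μ
  have hlo : ∃ x, f x ≤ z := ((tendsto_cdf_atBot μ).eventually (eventually_le_nhds hz.1)).exists
  have hhi : ∃ x, z < f x := ((tendsto_cdf_atTop μ).eventually (eventually_gt_nhds hz.2)).exists
  obtain ⟨x₀, hL, hF, hgt⟩ := f.exists_leftLim_le_le_and_lt_leftLim hlo hhi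
  have hmeas : MeasurableSet {p : ℝ × ℝ | (1 - p.2) * leftLim f p.1 + p.2 * f p.1 ≤ z} := by
    have := f.mono.leftLim.measurable
    have := f.mono.measurable
    exact measurableSet_le (by fun_prop) measurable_const
  have hbelow : ∀ x < x₀,
      volume.restrict (Ico (0 : ℝ) 1) {y | (1 - y) * leftLim f x + y * f x ≤ z} = 1 :=
    fun x hx => restrict_Ico_setOf_convexCombo_le_eq_one
      ((f.mono.leftLim_le le_rfl).trans ((f.mono.le_leftLim hx).trans hL))
      ((f.mono.le_leftLim hx).trans hL)
  have habove : ∀ x, x₀ < x →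
      volume.restrict (Ico (0 : ℝ) 1) {y | (1 - y) * leftLim f x + y * f x ≤ z} = 0 :=
    fun x hx => restrict_Ico_setOf_convexCombo_le_eq_zero (hgt x hx)
      ((hgt x hx).trans_le (f.mono.leftLim_le le_rfl))
  have hL₀ : 0 ≤ leftLim f x₀ := (cdf_nonneg μ (x₀ - 1)).trans (f.mono.le_leftLim (sub_one_lt x₀))
  rw [Measure.prod_apply hmeas]
  simp only [preimage_ofPred_eq]
  rw [lintegral_eq_measure_Iio_add_measure_singleton_mul μ hbelow habove, ← measure_cdf μ,
    f.measure_Iio (tendsto_cdf_atBot μ), f.measure_singleton,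
    ofReal_sub_mul_restrict_Ico_setOf_convexCombo_le hL hF, sub_zero,
    ← ENNReal.ofReal_add hL₀ (sub_nonneg.mpr hL), add_sub_cancel]

theorem uniformization_uniform_general
    (m : Measure ℝ) [IsProbabilityMeasure m]
    (F : ℝ → ℝ) (hF : ∀ x, F x = (m (Set.Iic x)).toReal)
    (U : ℝ × ℝ → ℝ)
    (hU : ∀ p : ℝ × ℝ,
      U p = (1 - p.2) * Function.leftLim F p.1 + p.2 * Function.rightLim F p.1) :
    ∀ z ∈ Set.Ioo (0 : ℝ) 1,
      (m.prod (volume.restrict (Set.Ico (0 : ℝ) 1))) {p | U p ≤ z} = ENNReal.ofReal z := by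
  have hFcdf : F = cdf m := funext fun x => by rw [hF, cdf_eq_real, measureReal_def]
  have hUcdf : U = fun p => (1 - p.2) * leftLim (cdf m) p.1 + p.2 * cdf m p.1 :=
    funext fun p => by rw [hU, hFcdf, (cdf m).rightLim_eq]
  subst hUcdf
  exact fun z hz => prod_restrict_Ico_setOf_convexCombo_cdf_le m hz

/-- Let m be a probability measure on (0,∞) with CDF F_m.  On
(0,∞) × [0,1) with the product of m and Lebesgue measure, the random variable
U_m(x,y) = (1-y)·F_m(x⁻) + y·F_m(x⁺) is uniformly distributed on [0,1]. -/
theorem uniformization_uniform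
    (m : Measure ℝ) [IsProbabilityMeasure m] (hsupp : m (Set.Iic 0) = 0)
    (F : ℝ → ℝ) (hF : ∀ x, F x = (m (Set.Iic x)).toReal)
    (U : ℝ × ℝ → ℝ)
    (hU : ∀ p : ℝ × ℝ,
      U p = (1 - p.2) * Function.leftLim F p.1 + p.2 * Function.rightLim F p.1) :
    ∀ z ∈ Set.Ioo (0 : ℝ) 1,
      (m.prod (volume.restrict (Set.Ico (0 : ℝ) 1))) {p | U p ≤ z} = ENNReal.ofReal z :=
  uniformization_uniform_general m F hF U hU
end
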